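/- arXiv:1902.01621 — 10 statements merged into one kernel-verified Lean document; each statement's English description precedes it below -/
import Mathlib

section
/- Let k be a positive natural number and define h(c) = -1 + 5c^2 + 2c^4 - sqrt(1 + 2c^2 + c^4 + 32c^6) for real c > 0. Then h is strictly increasing on (0,∞) and h(1) = 0. -/
open Real Set

theorem stmt_0 (k : ℕ) (hk : 0 < k) (h : ℝ → ℝ)
    (hdef : ∀ c : ℝ, h c =
      -1 + 5 * c ^ 2 + 2 * c ^ 4 - Real.sqrt (1 + 2 * c ^ 2 + c ^ 4 + 32 * c ^ 6)) :
    StrictMonoOn h (Set.Ioi (0 : ℝ)) ∧ h 1 = 0 := by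
  have hfun : h = fun c : ℝ => -1 + 5 * c ^ 2 + 2 * c ^ 4
      - Real.sqrt (1 + 2 * c ^ 2 + c ^ 4 + 32 * c ^ 6) := funext hdef
  have hQpos : ∀ c : ℝ, 0 < 1 + 2 * c ^ 2 + c ^ 4 + 32 * c ^ 6 := by
    intro c; positivity
  constructor
  · apply strictMonoOn_of_deriv_pos (convex_Ioi 0)
    · rw [hfun]
      exact (Continuous.sub (by continuity) (Real.continuous_sqrt.comp (by continuity))).continuousOn
    · intro x hx
      rw [interior_Ioi] at hx
      have hxpos : (0:ℝ) < x := hx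
      set Q : ℝ := 1 + 2 * x ^ 2 + x ^ 4 + 32 * x ^ 6 with hQ
      have hQp : 0 < Q := hQpos x
      have hs : 0 < Real.sqrt Q := Real.sqrt_pos.mpr hQp
      have hs2 : Real.sqrt Q ^ 2 = Q := Real.sq_sqrt hQp.le
      have hq' : HasDerivAt (fun c : ℝ => 1 + 2 * c ^ 2 + c ^ 4 + 32 * c ^ 6)
          (4 * x + 4 * x ^ 3 + 192 * x ^ 5) x := by
        have h1 : HasDerivAt (fun _ : ℝ => (1:ℝ)) 0 x := hasDerivAt_const x 1
        have := ((h1.add ((hasDerivAt_pow 2 x).const_mul (2:ℝ))).add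
          (hasDerivAt_pow 4 x)).add ((hasDerivAt_pow 6 x).const_mul (32:ℝ))
        refine this.congr_deriv ?_
        push_cast; ring
      have hsq : HasDerivAt (fun c : ℝ => Real.sqrt (1 + 2 * c ^ 2 + c ^ 4 + 32 * c ^ 6))
          (1 / (2 * Real.sqrt Q) * (4 * x + 4 * x ^ 3 + 192 * x ^ 5)) x := by
        exact (Real.hasDerivAt_sqrt hQp.ne').comp x hq'
      have hp : HasDerivAt (fun c : ℝ => -1 + 5 * c ^ 2 + 2 * c ^ 4)
          (10 * x + 8 * x ^ 3) x := by
        have h1 : HasDerivAt (fun _ : ℝ => (-1:ℝ)) 0 x := hasDerivAt_const x (-1)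
        have := (h1.add ((hasDerivAt_pow 2 x).const_mul (5:ℝ))).add
          ((hasDerivAt_pow 4 x).const_mul (2:ℝ))
        refine this.congr_deriv ?_
        push_cast; ring
      have hd : HasDerivAt h
          (10 * x + 8 * x ^ 3 - 1 / (2 * Real.sqrt Q) * (4 * x + 4 * x ^ 3 + 192 * x ^ 5)) x := by
        rw [hfun]; exact hp.sub hsq
      rw [hd.deriv]
      rw [sub_pos, div_mul_eq_mul_div, one_mul, div_lt_iff₀ (by positivity)]
      -- goal: 4x+4x³+192x⁵ < (10x+8x³) * (2 * √Q)
      have key : (4 * x + 4 * x ^ 3 + 192 * x ^ 5) ^ 2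
          < ((10 * x + 8 * x ^ 3) * (2 * Real.sqrt Q)) ^ 2 := by
        have expand : ((10 * x + 8 * x ^ 3) * (2 * Real.sqrt Q)) ^ 2
            = (10 * x + 8 * x ^ 3) ^ 2 * 4 * Q := by
          rw [mul_pow, mul_pow]; rw [hs2]; ring
        rw [expand, hQ]
        nlinarith [mul_nonneg (pow_nonneg hxpos.le 8) (sq_nonneg (x ^ 2 - 63/64)),
          pow_pos hxpos 2, pow_pos hxpos 4, sq_nonneg x,
          mul_nonneg (pow_nonneg hxpos.le 2) (sq_nonneg (x ^ 2 - 1))]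
      have hA : 0 ≤ (10 * x + 8 * x ^ 3) * (2 * Real.sqrt Q) := by positivity
      nlinarith [key, hA, sq_nonneg ((4 * x + 4 * x ^ 3 + 192 * x ^ 5) - (10 * x + 8 * x ^ 3) * (2 * Real.sqrt Q))]
  · rw [hdef]
    have : (1:ℝ) + 2 * 1 ^ 2 + 1 ^ 4 + 32 * 1 ^ 6 = 36 := by norm_num
    rw [this]
    rw [show (36:ℝ) = 6 ^ 2 by norm_num, Real.sqrt_sq (by norm_num)]
    norm_num
end

section
/- Let k, m be positive natural numbers and define λ(m) = (1/2)(-k^4 + 5k^2 m^2 + 2m^4 - sqrt(k^8 + 2k^6 m^2 + k^4 m^4 + 32 k^2 m^6)). Then λ(m) < 0 if 1 ≤ m ≤ k-1, λ(m) = 0 if m = k, and λ(m) > 0 if m > k. -/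
/-!
Write `λ = (A - √D) / 2` with `A = -k⁴ + 5k²m² + 2m⁴` and `D = k⁸ + 2k⁶m² + k⁴m⁴ + 32k²m⁶`.
The identity `D - A² = 4m²(k² - m²)((m² - k²)² + 2k⁴)` shows that `D - A²` has the sign of
`k - m`. So `A < √D` for `m < k`, `D = (6m⁴)² = A²` for `m = k`, and for `m > k`, where also
`A > 0`, `√D < A`.
-/

open Real

theorem biharmonic_disc_sub_sq (k m : ℝ) :
    (k^8 + 2*k^6*m^2 + k^4*m^4 + 32*k^2*m^6) - (-k^4 + 5*k^2*m^2 + 2*m^4)^2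
      = 4*m^2*(k^2 - m^2)*((m^2 - k^2)^2 + 2*k^4) := by
  ring

theorem biharmonic_sq_lt_disc {k m : ℝ} (hm : m ≠ 0) (h : m^2 < k^2) :
    (-k^4 + 5*k^2*m^2 + 2*m^4)^2 < k^8 + 2*k^6*m^2 + k^4*m^4 + 32*k^2*m^6 := by
  have hpos : 0 < 4*m^2*(k^2 - m^2)*((m^2 - k^2)^2 + 2*k^4) := by
    have : m^2 - k^2 ≠ 0 := sub_ne_zero.mpr h.ne
    have := sub_pos.mpr h
    positivity
  linarith [biharmonic_disc_sub_sq k m]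

theorem biharmonic_disc_lt_sq {k m : ℝ} (h : k^2 < m^2) :
    k^8 + 2*k^6*m^2 + k^4*m^4 + 32*k^2*m^6 < (-k^4 + 5*k^2*m^2 + 2*m^4)^2 := by
  have hneg : 4*m^2*(k^2 - m^2)*((m^2 - k^2)^2 + 2*k^4) < 0 := by
    have hm : 0 < m^2 := (sq_nonneg k).trans_lt h
    have : m^2 - k^2 ≠ 0 := sub_ne_zero.mpr h.ne'
    exact mul_neg_of_neg_of_pos (mul_neg_of_pos_of_neg (by positivity) (by linarith))
      (by positivity)
  linarith [biharmonic_disc_sub_sq k m]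

theorem biharmonic_A_pos {k m : ℝ} (h : k^2 < m^2) : 0 < -k^4 + 5*k^2*m^2 + 2*m^4 := by
  have hm : 0 < m^2 := (sq_nonneg k).trans_lt h
  nlinarith [mul_nonneg (sq_nonneg k) (sub_nonneg.mpr h.le)]

theorem half_sub_sqrt_neg {a d : ℝ} (h : a^2 < d) : (1/2) * (a - √d) < 0 := by
  have : a < √d := calc
    a ≤ |a| := le_abs_self a
    _ = √(a^2) := (sqrt_sq_eq_abs a).symm
    _ < √d := sqrt_lt_sqrt (sq_nonneg a) h
  linarith

theorem half_sub_sqrt_pos {a d : ℝ} (ha : 0 < a) (h : d < a^2) : 0 < (1/2) * (a - √d) := by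
  have : √d < a := (sqrt_lt' ha).mpr h
  linarith

theorem stmt_1_general (k m : ℕ)
    (lam : ℝ)
    (hlam : lam = (1/2) * (-(k:ℝ)^4 + 5*(k:ℝ)^2*(m:ℝ)^2 + 2*(m:ℝ)^4
      - Real.sqrt ((k:ℝ)^8 + 2*(k:ℝ)^6*(m:ℝ)^2 + (k:ℝ)^4*(m:ℝ)^4 + 32*(k:ℝ)^2*(m:ℝ)^6))) :
    (1 ≤ m ∧ m ≤ k - 1 → lam < 0) ∧ (m = k → lam = 0) ∧ (m > k → 0 < lam) := by
  subst hlam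
  refine ⟨fun ⟨hm, hmk⟩ => ?_, fun hmk => ?_, fun hkm => ?_⟩
  · have hm : (m:ℝ) ≠ 0 := by positivity
    have hsq : (m:ℝ)^2 < (k:ℝ)^2 := by gcongr; exact_mod_cast (by omega : m < k)
    exact half_sub_sqrt_neg (biharmonic_sq_lt_disc hm hsq)
  · subst hmk
    have hD : (m:ℝ)^8 + 2*(m:ℝ)^6*(m:ℝ)^2 + (m:ℝ)^4*(m:ℝ)^4 + 32*(m:ℝ)^2*(m:ℝ)^6
        = (6*(m:ℝ)^4)^2 := by ring
    rw [hD, sqrt_sq (by positivity)]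
    ring
  · have hsq : (k:ℝ)^2 < (m:ℝ)^2 := by gcongr
    exact half_sub_sqrt_pos (biharmonic_A_pos hsq) (biharmonic_disc_lt_sq hsq)

theorem stmt_1 (k m : ℕ) (hk : 0 < k) (hm : 0 < m)
    (lam : ℝ)
    (hlam : lam = (1/2) * (-(k:ℝ)^4 + 5*(k:ℝ)^2*(m:ℝ)^2 + 2*(m:ℝ)^4
      - Real.sqrt ((k:ℝ)^8 + 2*(k:ℝ)^6*(m:ℝ)^2 + (k:ℝ)^4*(m:ℝ)^4 + 32*(k:ℝ)^2*(m:ℝ)^6))) :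
    (1 ≤ m ∧ m ≤ k - 1 → lam < 0) ∧ (m = k → lam = 0) ∧ (m > k → 0 < lam) :=
  stmt_1_general k m lam hlam
end

section
/- For each positive natural number k, the number of pairs (m,n) of positive natural numbers satisfying -k^4 + k^2(5m^2 + n^2) + 2(m^2+n^2)^2 < sqrt(k^8 + 2k^6(m^2+n^2) + k^4(m^2+n^2)^2 + 32 k^2 m^2 (m^2+n^2)^2) is at most k^2. -/
/-!
Write `a = m²`, `b = n²`, `t = k²`, `s = a + b`, and let `L < √R` be the inequality. Then
`4 * gapPoly a b t = L² - R`, and `L < √R` forces `L² < R` even when `L ≤ 0`, because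
`L = 2 (s (t + s) + 2 t a) - t (t + s) > -t (t + s)` and `t² (t + s)² ≤ R`. The quartic `gapPoly` is
nonnegative as soon as `b ≥ t`, or `a ≥ (26/25)² t`, or `s ≥ (7/5) t`. So every solution has
`n < k`, `25 m < 26 k` and, since `(m + n)² ≤ 2 (m² + n²)`, `10 (m + n) < 17 k`. Counted column by
column, this trapezoid holds about `0.98 k²` lattice points.
-/

open Finset

theorem finite_and_ncard_le_of_subset_finset {α : Type*} {S : Set α} {T : Finset α} {c : ℕ}
    (hST : S ⊆ T) (hT : #T ≤ c) : S.Finite ∧ S.ncard ≤ c :=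
  ⟨T.finite_toSet.subset hST,
    (Set.ncard_le_ncard hST T.finite_toSet).trans ((Set.ncard_coe_finset T).trans_le hT)⟩

noncomputable def gapPoly (a b t : ℝ) : ℝ :=
  ((a + b) * (t + (a + b)) + 2 * t * a) * ((a + b) ^ 2 - t ^ 2 + 2 * t * a) - 8 * t * a * (a + b) ^ 2

theorem gapPoly_neg_of_lt_sqrt {a b t : ℝ} (ha : 0 < a) (hb : 0 ≤ b) (ht : 0 ≤ t)
    (h : -t ^ 2 + t * (5 * a + b) + 2 * (a + b) ^ 2 <
      √(t ^ 4 + 2 * t ^ 3 * (a + b) + t ^ 2 * (a + b) ^ 2 + 32 * t * a * (a + b) ^ 2)) :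
    gapPoly a b t < 0 := by
  set L := -t ^ 2 + t * (5 * a + b) + 2 * (a + b) ^ 2
  set R := t ^ 4 + 2 * t ^ 3 * (a + b) + t ^ 2 * (a + b) ^ 2 + 32 * t * a * (a + b) ^ 2
  have hgap : 4 * gapPoly a b t = L ^ 2 - R := by unfold gapPoly; ring
  suffices L ^ 2 < R by linarith
  rcases le_or_gt L 0 with hL | hL
  · have hv : 0 < (a + b) * (t + (a + b)) + 2 * t * a := by positivity
    have hLuv : t * (t + (a + b)) - 2 * ((a + b) * (t + (a + b)) + 2 * t * a) = -L := by ring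
    have htas : 0 ≤ t * a * (a + b) ^ 2 := by positivity
    nlinarith
  · exact (Real.lt_sqrt hL.le).mp h

theorem gapPoly_nonneg_of_le_right {a b t : ℝ} (ha : 0 ≤ a) (ht : 0 ≤ t) (h : t ≤ b) :
    0 ≤ gapPoly a b t := by
  unfold gapPoly
  nlinarith [mul_nonneg ha (sub_nonneg.2 h), mul_nonneg ha ht, mul_nonneg (sub_nonneg.2 h) ht,
    sq_nonneg a, sq_nonneg (b - t), sq_nonneg t, pow_nonneg ht 3, pow_nonneg ha 3]

theorem gapPoly_nonneg_of_le_left {a b t : ℝ} (hb : 0 ≤ b) (ht : 0 ≤ t) (h : 676 * t ≤ 625 * a) :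
    0 ≤ gapPoly a b t := by
  unfold gapPoly
  nlinarith [mul_nonneg (sub_nonneg.2 h) hb, mul_nonneg (sub_nonneg.2 h) ht, mul_nonneg hb ht,
    sq_nonneg (625 * a - 676 * t), sq_nonneg b, sq_nonneg t,
    mul_nonneg (mul_nonneg ht ht) (sq_nonneg (11 * b - 2 * t)), pow_nonneg ht 3]

/-- Completing the square in `a` leaves `t (8 s³ - 9 s² t - 2 s t² - t³) / 4` with `s = a + b`,
a cubic in `s` whose Taylor coefficients at `s = 7t/5` are all positive. -/
theorem gapPoly_nonneg_of_le_add {a b t : ℝ} (ht : 0 ≤ t) (h : 7 * t ≤ 5 * (a + b)) :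
    0 ≤ gapPoly a b t := by
  have hd : 0 ≤ 5 * (a + b) - 7 * t := by linarith
  unfold gapPoly
  nlinarith [sq_nonneg (4 * t * a - (2 * (a + b) ^ 2 - (a + b) * t + t ^ 2)),
    mul_nonneg ht (pow_nonneg hd 3), mul_nonneg (pow_nonneg ht 2) (pow_nonneg hd 2),
    mul_nonneg (pow_nonneg ht 3) hd, pow_nonneg ht 4]

def trapezoid (A B k : ℕ) : Finset (ℕ × ℕ) :=
  (Icc 1 k).biUnion fun n => (Icc 1 (min A (B - n))).image fun m => (m, n)

theorem mem_trapezoid {A B k m n : ℕ} (hm : 0 < m) (hmA : m ≤ A) (hmn : m + n ≤ B)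
    (hn : 0 < n) (hnk : n ≤ k) : (m, n) ∈ trapezoid A B k := by
  simp only [trapezoid, mem_biUnion, mem_Icc, mem_image]
  exact ⟨n, ⟨hn, hnk⟩, m, ⟨hm, le_min hmA (by omega)⟩, rfl⟩

theorem card_trapezoid_le (A B k : ℕ) : #(trapezoid A B k) ≤ ∑ n ∈ Icc 1 k, min A (B - n) :=
  card_biUnion_le.trans <| sum_le_sum fun n _ => card_image_le.trans (by rw [Nat.card_Icc]; omega)

theorem two_mul_sum_min_add_sub {A j i : ℕ} (hi : i ≤ A) :
    2 * ∑ n ∈ Icc 1 (j + i), min A (A + j - n) + i * (i + 1) = 2 * (j + i) * A := by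
  induction i with
  | zero =>
    have hconst : ∀ n ∈ Icc 1 j, min A (A + j - n) = A := fun n hn => by
      rw [mem_Icc] at hn; omega
    rw [add_zero, sum_congr rfl hconst, sum_const, Nat.card_Icc, Nat.add_sub_cancel, smul_eq_mul]
    ring
  | succ i ih =>
    rw [← add_assoc, sum_Icc_succ_top (by omega), min_eq_right (by omega)]
    have := ih (by omega)
    zify [(by omega : j + i + 1 ≤ A + j), (by omega : i + 1 ≤ A)] at this ⊢
    linear_combination this

theorem sum_min_le_sq (k : ℕ) : ∑ n ∈ Icc 1 k, min (26 * k / 25) (17 * k / 10 - n) ≤ k ^ 2 := by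
  have hA : 25 * (26 * k / 25) ≤ 26 * k := Nat.mul_div_le _ _
  have hB : 10 * (17 * k / 10) ≤ 17 * k := Nat.mul_div_le _ _
  obtain ⟨j, hj⟩ : ∃ j, 17 * k / 10 = 26 * k / 25 + j :=
    ⟨_, (Nat.add_sub_of_le (by omega)).symm⟩
  obtain ⟨i, rfl⟩ : ∃ i, k = j + i := ⟨_, (Nat.add_sub_of_le (by omega)).symm⟩
  have hsum := two_mul_sum_min_add_sub (A := 26 * (j + i) / 25) (j := j) (i := i) (by omega)
  rw [hj]
  generalize 26 * (j + i) / 25 = A at *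
  rw [hj] at hB
  nlinarith

theorem mem_trapezoid_of_gapPoly_neg {k m n : ℕ} (hm : 0 < m) (hn : 0 < n)
    (h : gapPoly ((m : ℝ) ^ 2) ((n : ℝ) ^ 2) ((k : ℝ) ^ 2) < 0) :
    (m, n) ∈ trapezoid (26 * k / 25) (17 * k / 10) k := by
  have hnk : n ≤ k := by
    by_contra! hkn
    have : (k : ℝ) ^ 2 ≤ (n : ℝ) ^ 2 := by gcongr
    exact h.not_ge (gapPoly_nonneg_of_le_right (by positivity) (by positivity) this)
  have hmk : 25 * m < 26 * k := by
    by_contra! hkm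
    have : 676 * k ^ 2 ≤ 625 * m ^ 2 := by nlinarith
    exact h.not_ge (gapPoly_nonneg_of_le_left (by positivity) (by positivity) (by exact_mod_cast this))
  have hmnk : 10 * (m + n) < 17 * k := by
    by_contra! hkmn
    have : 7 * k ^ 2 ≤ 5 * (m ^ 2 + n ^ 2) := by nlinarith [sq_nonneg ((m : ℤ) - n)]
    exact h.not_ge (gapPoly_nonneg_of_le_add (by positivity) (by exact_mod_cast this))
  exact mem_trapezoid hm (by omega) (by omega) hn hnk

theorem stmt_3_general (k : ℕ) :
    {p : ℕ × ℕ | 0 < p.1 ∧ 0 < p.2 ∧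
      -(k:ℝ)^4 + (k:ℝ)^2 * (5*(p.1:ℝ)^2 + (p.2:ℝ)^2) + 2 * ((p.1:ℝ)^2 + (p.2:ℝ)^2)^2
        < Real.sqrt ((k:ℝ)^8 + 2*(k:ℝ)^6*((p.1:ℝ)^2+(p.2:ℝ)^2)
            + (k:ℝ)^4*((p.1:ℝ)^2+(p.2:ℝ)^2)^2
            + 32*(k:ℝ)^2*(p.1:ℝ)^2*((p.1:ℝ)^2+(p.2:ℝ)^2)^2)}.Finite ∧
    {p : ℕ × ℕ | 0 < p.1 ∧ 0 < p.2 ∧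
      -(k:ℝ)^4 + (k:ℝ)^2 * (5*(p.1:ℝ)^2 + (p.2:ℝ)^2) + 2 * ((p.1:ℝ)^2 + (p.2:ℝ)^2)^2
        < Real.sqrt ((k:ℝ)^8 + 2*(k:ℝ)^6*((p.1:ℝ)^2+(p.2:ℝ)^2)
            + (k:ℝ)^4*((p.1:ℝ)^2+(p.2:ℝ)^2)^2
            + 32*(k:ℝ)^2*(p.1:ℝ)^2*((p.1:ℝ)^2+(p.2:ℝ)^2)^2)}.ncard ≤ k^2 := by
  refine finite_and_ncard_le_of_subset_finset (T := trapezoid (26 * k / 25) (17 * k / 10) k) ?_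
    ((card_trapezoid_le _ _ _).trans (sum_min_le_sq k))
  rintro ⟨m, n⟩ ⟨hm, hn, h⟩
  refine mem_trapezoid_of_gapPoly_neg hm hn (gapPoly_neg_of_lt_sqrt (by positivity)
    (by positivity) (by positivity) ?_)
  convert h using 2 <;> ring

theorem stmt_3 (k : ℕ) (hk : 0 < k) :
    {p : ℕ × ℕ | 0 < p.1 ∧ 0 < p.2 ∧
      -(k:ℝ)^4 + (k:ℝ)^2 * (5*(p.1:ℝ)^2 + (p.2:ℝ)^2) + 2 * ((p.1:ℝ)^2 + (p.2:ℝ)^2)^2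
        < Real.sqrt ((k:ℝ)^8 + 2*(k:ℝ)^6*((p.1:ℝ)^2+(p.2:ℝ)^2)
            + (k:ℝ)^4*((p.1:ℝ)^2+(p.2:ℝ)^2)^2
            + 32*(k:ℝ)^2*(p.1:ℝ)^2*((p.1:ℝ)^2+(p.2:ℝ)^2)^2)}.Finite ∧
    {p : ℕ × ℕ | 0 < p.1 ∧ 0 < p.2 ∧
      -(k:ℝ)^4 + (k:ℝ)^2 * (5*(p.1:ℝ)^2 + (p.2:ℝ)^2) + 2 * ((p.1:ℝ)^2 + (p.2:ℝ)^2)^2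
        < Real.sqrt ((k:ℝ)^8 + 2*(k:ℝ)^6*((p.1:ℝ)^2+(p.2:ℝ)^2)
            + (k:ℝ)^4*((p.1:ℝ)^2+(p.2:ℝ)^2)^2
            + 32*(k:ℝ)^2*(p.1:ℝ)^2*((p.1:ℝ)^2+(p.2:ℝ)^2)^2)}.ncard ≤ k^2 :=
  stmt_3_general k
end

section
/- There is no pair (m,n) of positive natural numbers for which (1/2)(-1 + (5m^2 + n^2) + 2(m^2+n^2)^2 - sqrt(1 + 2(m^2+n^2) + (m^2+n^2)^2 + 32 m^2 (m^2+n^2)^2)) is negative. Consequently f(1) = 0. -/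
/-!
Write `s = m² + n²`. The eigenvalue is `(B - √R) / 2` with `B = 2s² + s - 1 + 4m²` and
`R = (s + 1)² + 32 m² s²`. As soon as `n² ≥ 1`, `B ≥ 0` and `B² - R` is a sum of nonnegative
terms in `s` and `n² - 1`, so `√R ≤ B`; in particular `λ⁻` is never negative at a lattice point.
-/

/-- `λ⁻_{m,n}` at `k = 1`, extended to real `m, n`. -/
noncomputable def lambdaMinusOne (m n : ℝ) : ℝ :=
  (1/2) * (-1 + (5*m^2 + n^2) + 2*(m^2+n^2)^2
    - Real.sqrt (1 + 2*(m^2+n^2) + (m^2+n^2)^2 + 32*m^2*(m^2+n^2)^2))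

lemma lambdaMinusOne_radicand_le_sq (m n : ℝ) (hn : 1 ≤ n^2) :
    1 + 2*(m^2+n^2) + (m^2+n^2)^2 + 32*m^2*(m^2+n^2)^2
      ≤ (-1 + (5*m^2 + n^2) + 2*(m^2+n^2)^2)^2 := by
  set s := m^2 + n^2
  -- obtained by expanding `B² - R` as a quadratic in `m² = s - 1 - (n² - 1)` around `n² = 1`
  have sq_sub_radicand : (-1 + (5*m^2 + n^2) + 2*s^2)^2 - (1 + 2*s + s^2 + 32*m^2*s^2)
      = 4*(s-1)^2*(s^2-s+6) + 8*(n^2-1)*(2*s^2-5*s+5) + 16*(n^2-1)^2 := by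
    simp only [s]; ring
  have h₁ : 0 ≤ s^2 - s + 6 := by nlinarith [sq_nonneg (s - 1/2)]
  have h₂ : 0 ≤ 2*s^2 - 5*s + 5 := by nlinarith [sq_nonneg (s - 5/4)]
  have h₃ : 0 ≤ n^2 - 1 := by linarith
  nlinarith [mul_nonneg (sq_nonneg (s-1)) h₁, mul_nonneg h₃ h₂, sq_nonneg (n^2-1)]

lemma lambdaMinusOne_nonneg (m n : ℝ) (hn : 1 ≤ n^2) : 0 ≤ lambdaMinusOne m n := by
  have hB : 0 ≤ -1 + (5*m^2 + n^2) + 2*(m^2+n^2)^2 := by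
    nlinarith [sq_nonneg m, sq_nonneg (m^2+n^2)]
  have := Real.sqrt_le_iff.mpr ⟨hB, lambdaMinusOne_radicand_le_sq m n hn⟩
  unfold lambdaMinusOne
  linarith

theorem stmt_4 :
    (¬ ∃ m n : ℕ, 0 < m ∧ 0 < n ∧
      (1/2 : ℝ) * (-1 + (5*(m:ℝ)^2 + (n:ℝ)^2) + 2*((m:ℝ)^2+(n:ℝ)^2)^2
        - Real.sqrt (1 + 2*((m:ℝ)^2+(n:ℝ)^2) + ((m:ℝ)^2+(n:ℝ)^2)^2
            + 32*(m:ℝ)^2*((m:ℝ)^2+(n:ℝ)^2)^2)) < 0) ∧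
    {p : ℕ × ℕ | 0 < p.1 ∧ 0 < p.2 ∧
      (1/2 : ℝ) * (-1 + (5*(p.1:ℝ)^2 + (p.2:ℝ)^2) + 2*((p.1:ℝ)^2+(p.2:ℝ)^2)^2
        - Real.sqrt (1 + 2*((p.1:ℝ)^2+(p.2:ℝ)^2) + ((p.1:ℝ)^2+(p.2:ℝ)^2)^2
            + 32*(p.1:ℝ)^2*((p.1:ℝ)^2+(p.2:ℝ)^2)^2)) < 0}.ncard = 0 := by
  have not_neg (m n : ℕ) (hn : 0 < n) : ¬ lambdaMinusOne m n < 0 :=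
    not_lt.mpr (lambdaMinusOne_nonneg m n (one_le_pow₀ (by exact_mod_cast hn)))
  refine ⟨fun ⟨m, n, _, hn, hneg⟩ => not_neg m n hn hneg, ?_⟩
  convert Set.ncard_empty (ℕ × ℕ)
  exact Set.eq_empty_of_forall_notMem fun p hp => not_neg p.1 p.2 hp.2.1 hp.2.2
end

section
/- Let k, m be positive natural numbers and consider the 4×4 real matrix M with rows (m^2(m^2+3k^2), 0, 0, -2√2 k m^3), (0, m^2(m^2+3k^2), 2√2 k m^3, 0), (0, 2√2 k m^3, m^4+2k^2m^2-k^4, 0), (-2√2 k m^3, 0, 0, m^4+2k^2m^2-k^4). Then the eigenvalues of M are λ± = (1/2)(-k^4 + 5k^2 m^2 + 2m^4 ± sqrt(k^8 + 2k^6 m^2 + k^4 m^4 + 32 k^2 m^6)), each with multiplicity 2. -/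
open Polynomial

lemma det4_aux {R : Type*} [CommRing R] (a b c d : R) :
    Matrix.det !![a,0,0,b; 0,a,c,0; 0,c,d,0; b,0,0,d] = (a*d - c*c) * (a*d - b*b) := by
  simp [Matrix.det_succ_row_zero, Fin.sum_univ_succ, Matrix.det_fin_three,
    show ((2:Fin 3).castSucc : Fin 4) = 2 from rfl,
    show (Fin.succAbove (3:Fin 4) (2:Fin 3)) = 2 by decide]
  ring

theorem stmt_5 (k m : ℕ) (hk : 0 < k) (hm : 0 < m)
    (M : Matrix (Fin 4) (Fin 4) ℝ)
    (hM : M = Matrix.of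
      ![![(m:ℝ)^2*((m:ℝ)^2+3*(k:ℝ)^2), 0, 0, -2*Real.sqrt 2*(k:ℝ)*(m:ℝ)^3],
        ![0, (m:ℝ)^2*((m:ℝ)^2+3*(k:ℝ)^2), 2*Real.sqrt 2*(k:ℝ)*(m:ℝ)^3, 0],
        ![0, 2*Real.sqrt 2*(k:ℝ)*(m:ℝ)^3, (m:ℝ)^4+2*(k:ℝ)^2*(m:ℝ)^2-(k:ℝ)^4, 0],
        ![-2*Real.sqrt 2*(k:ℝ)*(m:ℝ)^3, 0, 0, (m:ℝ)^4+2*(k:ℝ)^2*(m:ℝ)^2-(k:ℝ)^4]])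
    (lamP lamM : ℝ)
    (hP : lamP = (1/2) * (-(k:ℝ)^4 + 5*(k:ℝ)^2*(m:ℝ)^2 + 2*(m:ℝ)^4
      + Real.sqrt ((k:ℝ)^8 + 2*(k:ℝ)^6*(m:ℝ)^2 + (k:ℝ)^4*(m:ℝ)^4 + 32*(k:ℝ)^2*(m:ℝ)^6)))
    (hMm : lamM = (1/2) * (-(k:ℝ)^4 + 5*(k:ℝ)^2*(m:ℝ)^2 + 2*(m:ℝ)^4
      - Real.sqrt ((k:ℝ)^8 + 2*(k:ℝ)^6*(m:ℝ)^2 + (k:ℝ)^4*(m:ℝ)^4 + 32*(k:ℝ)^2*(m:ℝ)^6))) :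
    M.charpoly = ((X - C lamP) * (X - C lamM))^2 := by
  have h2 : Real.sqrt 2 ^ 2 = 2 := Real.sq_sqrt (by norm_num)
  have hD : Real.sqrt ((k:ℝ)^8 + 2*(k:ℝ)^6*(m:ℝ)^2 + (k:ℝ)^4*(m:ℝ)^4 + 32*(k:ℝ)^2*(m:ℝ)^6) ^ 2
      = (k:ℝ)^8 + 2*(k:ℝ)^6*(m:ℝ)^2 + (k:ℝ)^4*(m:ℝ)^4 + 32*(k:ℝ)^2*(m:ℝ)^6 :=
    Real.sq_sqrt (by positivity)
  set s := Real.sqrt 2 with hs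
  set t := Real.sqrt ((k:ℝ)^8 + 2*(k:ℝ)^6*(m:ℝ)^2 + (k:ℝ)^4*(m:ℝ)^4 + 32*(k:ℝ)^2*(m:ℝ)^6) with ht
  have hcm : M.charmatrix = !![X - C ((m:ℝ)^2*((m:ℝ)^2+3*(k:ℝ)^2)), 0, 0, C (2*s*(k:ℝ)*(m:ℝ)^3);
      0, X - C ((m:ℝ)^2*((m:ℝ)^2+3*(k:ℝ)^2)), -C (2*s*(k:ℝ)*(m:ℝ)^3), 0;
      0, -C (2*s*(k:ℝ)*(m:ℝ)^3), X - C ((m:ℝ)^4+2*(k:ℝ)^2*(m:ℝ)^2-(k:ℝ)^4), 0;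
      C (2*s*(k:ℝ)*(m:ℝ)^3), 0, 0, X - C ((m:ℝ)^4+2*(k:ℝ)^2*(m:ℝ)^2-(k:ℝ)^4)] := by
    subst hM
    ext i j
    fin_cases i <;> fin_cases j <;>
      simp [Matrix.charmatrix_apply_eq, Matrix.charmatrix_apply_ne, map_neg, map_mul]
  rw [Matrix.charpoly, hcm, det4_aux]
  apply Polynomial.funext
  intro x
  subst hP hMm
  simp only [eval_add, eval_sub, eval_mul, eval_neg, eval_pow, eval_X, eval_C, eval_one]
  linear_combination
    (((x - (m:ℝ)^2*((m:ℝ)^2+3*(k:ℝ)^2))*(x - ((m:ℝ)^4+2*(k:ℝ)^2*(m:ℝ)^2-(k:ℝ)^4))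
        - 4*s^2*(k:ℝ)^2*(m:ℝ)^6
      + (x - (1/2)*(-(k:ℝ)^4 + 5*(k:ℝ)^2*(m:ℝ)^2 + 2*(m:ℝ)^4 + t))
        * (x - (1/2)*(-(k:ℝ)^4 + 5*(k:ℝ)^2*(m:ℝ)^2 + 2*(m:ℝ)^4 - t)))
      * (-4*(k:ℝ)^2*(m:ℝ)^6)) * h2
    + ((((x - (m:ℝ)^2*((m:ℝ)^2+3*(k:ℝ)^2))*(x - ((m:ℝ)^4+2*(k:ℝ)^2*(m:ℝ)^2-(k:ℝ)^4))
        - 4*s^2*(k:ℝ)^2*(m:ℝ)^6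
      + (x - (1/2)*(-(k:ℝ)^4 + 5*(k:ℝ)^2*(m:ℝ)^2 + 2*(m:ℝ)^4 + t))
        * (x - (1/2)*(-(k:ℝ)^4 + 5*(k:ℝ)^2*(m:ℝ)^2 + 2*(m:ℝ)^4 - t)))) / 4) * hD
end

section
/- Let k, m, n be positive natural numbers and set A = (3m^2+n^2)k^2 + (m^2+n^2)^2, B = -k^4 + 2m^2 k^2 + (m^2+n^2)^2, C = 2√2 k m (m^2+n^2). Then the characteristic polynomial of the 8×8 matrix built from 2×2 blocks as in the text (diagonal entries A (four times) and B (four times), off-diagonal coupling entries ±C) equals [A(λ - B) + λ(B - λ) + C^2]^4, i.e. [−λ^2 + (A+B)λ − AB + C^2]^4, so its eigenvalues are λ± = ((A+B) ± sqrt((A-B)^2 + 4C^2))/2, each with multiplicity 4. -/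
/-!
Reordering the basis as the pairs `(e₀, e₆), (e₁, e₇), (e₂, e₄), (e₃, e₅)` makes the matrix block
diagonal with four `2 × 2` blocks `[[A, ∓C], [∓C, B]]`, each with characteristic polynomial
`X² - (A + B) X + (A B - C²)`. The discriminant of this quadratic is `(A - B)² + 4 C² ≥ 0`, so it
splits over `ℝ` with the roots `λ±`.
-/

open Polynomial Matrix

namespace Matrix

variable {R m o : Type*} [CommRing R] [DecidableEq m] [DecidableEq o] [Fintype m] [Fintype o]

theorem charmatrix_blockDiagonal (D : o → Matrix m m R) :
    charmatrix (blockDiagonal D) = blockDiagonal fun i => charmatrix (D i) := by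
  ext ⟨i, b⟩ ⟨j, c⟩
  by_cases h : b = c <;> by_cases h' : i = j <;> simp [blockDiagonal_apply, h, h']

theorem charpoly_blockDiagonal (D : o → Matrix m m R) :
    (blockDiagonal D).charpoly = ∏ i, (D i).charpoly := by
  rw [charpoly, charmatrix_blockDiagonal, det_blockDiagonal]
  rfl

theorem charpoly_symm_fin_two [Nontrivial R] (a b c : R) :
    (!![a, c; c, b]).charpoly = X ^ 2 - C (a + b) * X + C (a * b - c ^ 2) := by
  rw [charpoly_fin_two, trace_fin_two_of, det_fin_two_of, sq c]

end Matrix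

def couplingPairs : Fin 2 × Fin 4 ≃ Fin 8 where
  toFun p := ![![0, 1, 2, 3], ![6, 7, 4, 5]] p.1 p.2
  invFun i := ![(0, 0), (0, 1), (0, 2), (0, 3), (1, 2), (1, 3), (1, 0), (1, 1)] i
  left_inv := by decide
  right_inv := by decide

theorem charpoly_coupledBlocks {R : Type*} [CommRing R] [Nontrivial R] (A B C' : R) :
    (!![A, 0, 0, 0, 0, 0, -C', 0;
        0, A, 0, 0, 0, 0, 0, -C';
        0, 0, A, 0, C', 0, 0, 0;
        0, 0, 0, A, 0, C', 0, 0;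
        0, 0, C', 0, B, 0, 0, 0;
        0, 0, 0, C', 0, B, 0, 0;
        -C', 0, 0, 0, 0, 0, B, 0;
        0, -C', 0, 0, 0, 0, 0, B]).charpoly
      = (X ^ 2 - C (A + B) * X + C (A * B - C' ^ 2)) ^ 4 := by
  calc _ = (reindex couplingPairs couplingPairs (blockDiagonal
        ![!![A, -C'; -C', B], !![A, -C'; -C', B], !![A, C'; C', B], !![A, C'; C', B]])).charpoly := by
        congr 1
        ext i j
        fin_cases i <;> fin_cases j <;> rfl
    _ = _ := by
        rw [charpoly_reindex, charpoly_blockDiagonal, Fin.prod_univ_four]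
        simp only [cons_val_zero, cons_val_one, cons_val_two, cons_val_three, head_cons,
          tail_cons, charpoly_symm_fin_two, neg_sq]
        ring

theorem X_sub_C_mul_X_sub_C {R : Type*} [CommRing R] (x y : R) :
    (X - C x) * (X - C y) = X ^ 2 - C (x + y) * X + C (x * y) := by
  simp only [map_add, map_mul]
  ring

theorem X_sq_sub_C_mul_X_add_C_eq_mul {s p : ℝ} (hd : 0 ≤ s ^ 2 - 4 * p) :
    (X ^ 2 - C s * X + C p : ℝ[X])
      = (X - C ((s + √(s ^ 2 - 4 * p)) / 2)) * (X - C ((s - √(s ^ 2 - 4 * p)) / 2)) := by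
  have hsum : (s + √(s ^ 2 - 4 * p)) / 2 + (s - √(s ^ 2 - 4 * p)) / 2 = s := by ring
  have hprod : (s + √(s ^ 2 - 4 * p)) / 2 * ((s - √(s ^ 2 - 4 * p)) / 2) = p := by
    linear_combination (-1 / 4 : ℝ) * Real.sq_sqrt hd
  rw [X_sub_C_mul_X_sub_C, hsum, hprod]

theorem stmt_6_general
    (A B C' : ℝ)
    (M : Matrix (Fin 8) (Fin 8) ℝ)
    (hM : M = Matrix.of
      ![![A, 0, 0, 0, 0, 0, -C', 0],
        ![0, A, 0, 0, 0, 0, 0, -C'],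
        ![0, 0, A, 0, C', 0, 0, 0],
        ![0, 0, 0, A, 0, C', 0, 0],
        ![0, 0, C', 0, B, 0, 0, 0],
        ![0, 0, 0, C', 0, B, 0, 0],
        ![-C', 0, 0, 0, 0, 0, B, 0],
        ![0, -C', 0, 0, 0, 0, 0, B]])
    (lamP lamM : ℝ)
    (hP : lamP = ((A + B) + Real.sqrt ((A - B)^2 + 4*C'^2)) / 2)
    (hMm : lamM = ((A + B) - Real.sqrt ((A - B)^2 + 4*C'^2)) / 2) :
    M.charpoly = (X^2 - Polynomial.C (A + B) * X + Polynomial.C (A*B - C'^2))^4 ∧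
    M.charpoly = ((X - Polynomial.C lamP) * (X - Polynomial.C lamM))^4 := by
  have hcharpoly := hM ▸ charpoly_coupledBlocks A B C'
  have hdisc : (A + B) ^ 2 - 4 * (A * B - C' ^ 2) = (A - B) ^ 2 + 4 * C' ^ 2 := by ring
  refine ⟨hcharpoly, hcharpoly.trans ?_⟩
  rw [X_sq_sub_C_mul_X_add_C_eq_mul (hdisc ▸ by positivity), hdisc, hP, hMm]

theorem stmt_6 (k m n : ℕ) (hk : 0 < k) (hm : 0 < m) (hn : 0 < n)
    (A B C' : ℝ)
    (hA : A = (3*(m:ℝ)^2+(n:ℝ)^2)*(k:ℝ)^2 + ((m:ℝ)^2+(n:ℝ)^2)^2)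
    (hB : B = -(k:ℝ)^4 + 2*(m:ℝ)^2*(k:ℝ)^2 + ((m:ℝ)^2+(n:ℝ)^2)^2)
    (hC : C' = 2*Real.sqrt 2*(k:ℝ)*(m:ℝ)*((m:ℝ)^2+(n:ℝ)^2))
    (M : Matrix (Fin 8) (Fin 8) ℝ)
    (hM : M = Matrix.of
      ![![A, 0, 0, 0, 0, 0, -C', 0],
        ![0, A, 0, 0, 0, 0, 0, -C'],
        ![0, 0, A, 0, C', 0, 0, 0],
        ![0, 0, 0, A, 0, C', 0, 0],
        ![0, 0, C', 0, B, 0, 0, 0],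
        ![0, 0, 0, C', 0, B, 0, 0],
        ![-C', 0, 0, 0, 0, 0, B, 0],
        ![0, -C', 0, 0, 0, 0, 0, B]])
    (lamP lamM : ℝ)
    (hP : lamP = ((A + B) + Real.sqrt ((A - B)^2 + 4*C'^2)) / 2)
    (hMm : lamM = ((A + B) - Real.sqrt ((A - B)^2 + 4*C'^2)) / 2) :
    M.charpoly = (X^2 - Polynomial.C (A + B) * X + Polynomial.C (A*B - C'^2))^4 ∧
    M.charpoly = ((X - Polynomial.C lamP) * (X - Polynomial.C lamM))^4 :=
  stmt_6_general A B C' M hM lamP lamM hP hMm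
end

section
/- Suppose A : ℝ → ℝ is smooth and (A'')^2 + 2 A''' A' ≥ 0 on ℝ. Then for all smooth compactly supported f1, f2 : ℝ → ℝ, not both identically zero, the quantity ∫ℝ [(f1'')^2 + (f2'' + (A')^2 f2)^2 + ((A'')^2 + 2A''' A') f2^2] dγ is strictly positive. -/
open MeasureTheory

/-- A differentiable compactly supported function with zero derivative is zero. -/
lemma const_zero_of_deriv_zero (f : ℝ → ℝ) (hf : Differentiable ℝ f)
    (hfc : HasCompactSupport f) (h : ∀ x, deriv f x = 0) : f = 0 := by
  obtain ⟨c, hc⟩ := hfc.isCompact.bddAbove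
  have hx0 : f (c + 1) = 0 := by
    apply image_eq_zero_of_notMem_tsupport
    intro hmem
    have := hc hmem
    linarith
  funext x
  have := is_const_of_deriv_eq_zero hf h x (c + 1)
  simp [this, hx0]

/-- Uniqueness for the ODE f'' + (A')² f = 0 with compact support. -/
lemma ode_zero (A f2 : ℝ → ℝ) (hA : ContDiff ℝ (⊤ : ℕ∞) A) (hf2 : ContDiff ℝ (⊤ : ℕ∞) f2)
    (hf2c : HasCompactSupport f2)
    (hODE : ∀ t, iteratedDeriv 2 f2 t + (deriv A t)^2 * f2 t = 0) : f2 = 0 := by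
  obtain ⟨c, hc⟩ := hf2c.isCompact.bddBelow
  have hdf2 : Differentiable ℝ f2 := hf2.differentiable (by simp)
  have hdf2' : Differentiable ℝ (deriv f2) :=
    ((contDiff_infty_iff_deriv.mp (hf2.of_le (by simp))).2).differentiable (by simp)
  have hAd : Continuous (deriv A) := hA.continuous_deriv (by simp)
  -- f2 and deriv f2 vanish on Iio c
  have hvan : ∀ x < c, f2 x = 0 := by
    intro x hx
    apply image_eq_zero_of_notMem_tsupport
    intro hmem
    exact absurd (hc hmem) (by linarith)
  have hvan' : ∀ x < c, deriv f2 x = 0 := by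
    intro x hx
    have hev : f2 =ᶠ[nhds x] (fun _ => (0:ℝ)) := by
      filter_upwards [Iio_mem_nhds hx] with y hy using hvan y hy
    rw [hev.deriv_eq, deriv_const]
  -- the energy function
  set F : ℝ → ℝ := fun t => f2 t ^ 2 + deriv f2 t ^ 2 with hF
  have hFd : Differentiable ℝ F := by
    apply Differentiable.add <;> exact Differentiable.pow (by assumption) 2
  have hD2 : ∀ t, deriv (deriv f2) t = -((deriv A t)^2 * f2 t) := by
    intro t
    have := hODE t
    rw [iteratedDeriv_succ, iteratedDeriv_one] at this
    linarith
  have hFderiv : ∀ t, deriv F t = 2 * f2 t * deriv f2 t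
      + 2 * deriv f2 t * (-((deriv A t)^2 * f2 t)) := by
    intro t
    rw [hF]
    rw [deriv_fun_add (f := fun y => f2 y ^ 2) (g := fun y => deriv f2 y ^ 2) ((hdf2 t).pow 2) ((hdf2' t).pow 2), deriv_fun_pow (hdf2 t) 2,
      deriv_fun_pow (hdf2' t) 2, hD2 t]
    ring
  funext b
  simp only [Pi.zero_apply]
  by_cases hbc : b < c
  · exact hvan b hbc
  push_neg at hbc
  set a : ℝ := c - 1 with ha
  have hab : a ≤ b := by simp [ha]; linarith
  -- bound (deriv A)^2 on [a,b]
  obtain ⟨M, hM⟩ := (isCompact_Icc (a := a) (b := b)).exists_bound_of_continuousOn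
    (hAd.pow 2).continuousOn
  set K : ℝ := 1 + max M 0 with hK
  have hKpos : 0 < K := by positivity
  -- the damped energy g
  set g : ℝ → ℝ := fun t => F t * Real.exp (-K * t) with hg
  have hgd : Differentiable ℝ g := hFd.mul (by fun_prop)
  have hgderiv : ∀ t ∈ Set.Icc a b, deriv g t ≤ 0 := by
    intro t ht
    have hderiv : deriv g t = (deriv F t - K * F t) * Real.exp (-K * t) := by
      rw [hg]
      rw [deriv_fun_mul (hFd t) (by fun_prop)]
      have : deriv (fun t => Real.exp (-K * t)) t = -K * Real.exp (-K * t) := by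
        rw [show (fun t => Real.exp (-K * t)) = Real.exp ∘ (fun t => -K * t) by rfl]
        rw [deriv_comp _ (Real.differentiable_exp _) (by fun_prop), Real.deriv_exp,
          deriv_const_mul _ differentiableAt_fun_id]
        simp [mul_comm]
      rw [this]; ring
    rw [hderiv]
    apply mul_nonpos_of_nonpos_of_nonneg _ (Real.exp_nonneg _)
    rw [hFderiv]
    have hAb : (deriv A t)^2 ≤ M := by
      have := hM t ht
      calc (deriv A t)^2 = |(deriv A t)^2| := (abs_of_nonneg (sq_nonneg _)).symm
        _ ≤ M := by simpa using this
    have hA0 : (0:ℝ) ≤ (deriv A t)^2 := sq_nonneg _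
    have hMle : M ≤ max M 0 := le_max_left _ _
    have h1 : (f2 t - deriv f2 t)^2 ≥ 0 := sq_nonneg _
    have h2 : (f2 t + deriv f2 t)^2 ≥ 0 := sq_nonneg _
    have hAN : deriv A t ^ 2 ≤ max M 0 := hAb.trans hMle
    rw [hK, hF]
    beta_reduce
    nlinarith [sq_nonneg (f2 t - deriv f2 t), sq_nonneg (f2 t + deriv f2 t),
      mul_nonneg hA0 (sq_nonneg (f2 t - deriv f2 t)),
      mul_nonneg hA0 (sq_nonneg (f2 t + deriv f2 t)),
      mul_nonneg (sub_nonneg.mpr hAN)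
        (add_nonneg (sq_nonneg (f2 t)) (sq_nonneg (deriv f2 t)))]
  have hanti : AntitoneOn g (Set.Icc a b) := by
    apply antitoneOn_of_deriv_nonpos (convex_Icc a b) hgd.continuous.continuousOn
      hgd.differentiableOn
    intro t ht
    rw [interior_Icc] at ht
    exact hgderiv t ⟨le_of_lt ht.1, le_of_lt ht.2⟩
  have hga : g a = 0 := by
    have h1 : f2 a = 0 := hvan a (by simp [ha])
    have h2 : deriv f2 a = 0 := hvan' a (by simp [ha])
    simp [hg, hF, h1, h2]
  have hgb : g b ≤ 0 := by
    have := hanti (Set.left_mem_Icc.mpr hab) (Set.right_mem_Icc.mpr hab) hab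
    rw [hga] at this
    exact this
  have hFb : F b ≤ 0 := by
    have hexp : 0 < Real.exp (-K * b) := Real.exp_pos _
    by_contra hcon
    push_neg at hcon
    have : 0 < g b := mul_pos hcon hexp
    linarith
  have : F b = 0 := le_antisymm hFb (by positivity)
  rw [hF] at this
  beta_reduce at this
  have h2 : f2 b ^ 2 = 0 := by nlinarith [sq_nonneg (deriv f2 b), sq_nonneg (f2 b)]
  exact pow_eq_zero_iff (by norm_num) |>.mp h2

theorem stmt_9 (A : ℝ → ℝ) (hA : ContDiff ℝ (⊤ : ℕ∞) A)
    (hpos : ∀ γ : ℝ, (iteratedDeriv 2 A γ)^2 + 2 * iteratedDeriv 3 A γ * deriv A γ ≥ 0)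
    (f1 f2 : ℝ → ℝ)
    (hf1 : ContDiff ℝ (⊤ : ℕ∞) f1) (hf1c : HasCompactSupport f1)
    (hf2 : ContDiff ℝ (⊤ : ℕ∞) f2) (hf2c : HasCompactSupport f2)
    (hne : ¬ (f1 = 0 ∧ f2 = 0)) :
    0 < ∫ γ : ℝ,
      ((iteratedDeriv 2 f1 γ)^2
        + (iteratedDeriv 2 f2 γ + (deriv A γ)^2 * f2 γ)^2
        + ((iteratedDeriv 2 A γ)^2 + 2 * iteratedDeriv 3 A γ * deriv A γ) * (f2 γ)^2) := by
  set G : ℝ → ℝ := fun γ =>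
      ((iteratedDeriv 2 f1 γ)^2
        + (iteratedDeriv 2 f2 γ + (deriv A γ)^2 * f2 γ)^2
        + ((iteratedDeriv 2 A γ)^2 + 2 * iteratedDeriv 3 A γ * deriv A γ) * (f2 γ)^2) with hG
  have hcA1 : Continuous (deriv A) := hA.continuous_deriv (by simp)
  have hcont : ∀ (f : ℝ → ℝ), ContDiff ℝ (⊤ : ℕ∞) f → ∀ n : ℕ, Continuous (iteratedDeriv n f) := by
    intro f hf n
    rw [iteratedDeriv_eq_iterate]
    exact ((hf.of_le (by simp)).iterate_deriv n).continuous
  have hGcont : Continuous G := by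
    rw [hG]
    have := hcont A hA 2; have := hcont A hA 3
    have := hcont f1 hf1 2; have := hcont f2 hf2 2
    have := hf1.continuous; have := hf2.continuous
    fun_prop
  have hcs : ∀ (f : ℝ → ℝ), HasCompactSupport f → HasCompactSupport (iteratedDeriv 2 f) := by
    intro f hf
    rw [iteratedDeriv_eq_iterate]
    exact (hf.deriv).deriv
  have hGcs : HasCompactSupport G := by
    rw [hG]
    apply HasCompactSupport.add
    apply HasCompactSupport.add
    · rw [show (fun γ => (iteratedDeriv 2 f1 γ)^2) =
        (iteratedDeriv 2 f1) * (iteratedDeriv 2 f1) by funext γ; simp [sq]]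
      exact (hcs f1 hf1c).mul_right
    · have h : HasCompactSupport (fun γ => iteratedDeriv 2 f2 γ + (deriv A γ)^2 * f2 γ) :=
        (hcs f2 hf2c).add hf2c.mul_left
      rw [show (fun γ => (iteratedDeriv 2 f2 γ + (deriv A γ)^2 * f2 γ)^2) =
        (fun γ => iteratedDeriv 2 f2 γ + (deriv A γ)^2 * f2 γ) *
        (fun γ => iteratedDeriv 2 f2 γ + (deriv A γ)^2 * f2 γ) by funext γ; simp [sq]]
      exact h.mul_right
    · have h : HasCompactSupport (fun γ => (f2 γ)^2) := by
        rw [show (fun γ => (f2 γ)^2) = f2 * f2 by funext γ; simp [sq]]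
        exact hf2c.mul_right
      exact h.mul_left
  have hGint : Integrable G := hGcont.integrable_of_hasCompactSupport hGcs
  have hGnn : ∀ γ, 0 ≤ G γ := by
    intro γ
    rw [hG]
    have := hpos γ
    have := sq_nonneg (iteratedDeriv 2 f1 γ)
    have := sq_nonneg (iteratedDeriv 2 f2 γ + (deriv A γ)^2 * f2 γ)
    have := mul_nonneg (hpos γ) (sq_nonneg (f2 γ))
    positivity
  rw [integral_pos_iff_support_of_nonneg hGnn hGint]
  have hopen : IsOpen (Function.support G) := by
    rw [Function.support_eq_preimage]
    exact isOpen_compl_singleton.preimage hGcont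
  apply hopen.measure_pos volume
  -- support is nonempty
  by_contra hemp
  rw [Set.not_nonempty_iff_eq_empty, Function.support_eq_empty_iff] at hemp
  have hGzero : ∀ γ, G γ = 0 := fun γ => congrFun hemp γ
  apply hne
  have hterm : ∀ γ, (iteratedDeriv 2 f1 γ)^2 = 0 ∧
      (iteratedDeriv 2 f2 γ + (deriv A γ)^2 * f2 γ)^2 = 0 := by
    intro γ
    have h0 := hGzero γ
    rw [hG] at h0
    beta_reduce at h0
    have h1 := sq_nonneg (iteratedDeriv 2 f1 γ)
    have h2 := sq_nonneg (iteratedDeriv 2 f2 γ + (deriv A γ)^2 * f2 γ)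
    have h3 := mul_nonneg (hpos γ) (sq_nonneg (f2 γ))
    constructor <;> nlinarith
  constructor
  · -- f1 = 0 from f1'' = 0
    have h2 : ∀ γ, deriv (deriv f1) γ = 0 := by
      intro γ
      have := (hterm γ).1
      rw [pow_eq_zero_iff (by norm_num)] at this
      rw [iteratedDeriv_succ, iteratedDeriv_one] at this
      exact this
    have hdf1 : Differentiable ℝ (deriv f1) :=
      ((contDiff_infty_iff_deriv.mp (hf1.of_le (by simp))).2).differentiable (by simp)
    have h1 : deriv f1 = 0 := const_zero_of_deriv_zero _ hdf1 hf1c.deriv h2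
    exact const_zero_of_deriv_zero _ (hf1.differentiable (by simp)) hf1c
      (fun x => congrFun h1 x)
  · -- f2 = 0 from the ODE
    apply ode_zero A f2 hA hf2 hf2c
    intro t
    have := (hterm t).2
    rwa [pow_eq_zero_iff (by norm_num)] at this
end

section
/- Let n ≥ 2, R > 0 and consider the operator on smooth 2π-periodic functions v given by L v = v'''' − ((n-1)^2/R^4) v. Its eigenvalues on the space spanned by {1, cos(mθ), sin(mθ) : m ≥ 1} are λ_m = m^4 − (n-1)^2/R^4, with multiplicity 1 for m = 0 and 2 for m ≥ 1. Consequently, if √(n-1)/R ∉ ℕ*, the number of negative eigenvalues counted with multiplicity is 1 + 2⌊√(n-1)/R⌋ and there are no zero eigenvalues; if √(n-1)/R ∈ ℕ*, the number of negative eigenvalues counted with multiplicity is 1 + 2(√(n-1)/R − 1) and the kernel has dimension 2. -/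
/-! The functions `cos (m θ)` and `sin (m θ)` are eigenfunctions of `d⁴/dθ⁴` with eigenvalue `m⁴`,
so `L` has eigenvalue `λ_m = m⁴ - c⁴` on them, where `c = √(n-1)/R > 0`. Hence `λ_m < 0` iff `m < c`
and `λ_m = 0` iff `m = c`, and the index and nullity come from counting the positive integers
below `c` and equal to `c`. -/

open Real Set

theorem iteratedDeriv_even_cos_mul (k : ℕ) (a : ℝ) :
    iteratedDeriv (2 * k) (fun θ => cos (a * θ)) = fun θ => (-a ^ 2) ^ k * cos (a * θ) := by
  rw [iteratedDeriv_comp_const_mul contDiff_cos, iteratedDeriv_even_cos]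
  ext θ
  simp only [Pi.mul_apply, Pi.pow_apply, Pi.neg_apply, Pi.one_apply]
  rw [neg_pow, pow_mul]
  ring

theorem iteratedDeriv_even_sin_mul (k : ℕ) (a : ℝ) :
    iteratedDeriv (2 * k) (fun θ => sin (a * θ)) = fun θ => (-a ^ 2) ^ k * sin (a * θ) := by
  rw [iteratedDeriv_comp_const_mul contDiff_sin, iteratedDeriv_even_sin]
  ext θ
  simp only [Pi.mul_apply, Pi.pow_apply, Pi.neg_apply, Pi.one_apply]
  rw [neg_pow, pow_mul]
  ring

theorem Nat.ncard_setOf_pos_lt (k : ℕ) : {m : ℕ | 0 < m ∧ m < k}.ncard = k - 1 := by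
  have : {m : ℕ | 0 < m ∧ m < k} = Finset.Ioo 0 k := by ext; simp
  rw [this, ncard_coe_finset, Nat.card_Ioo, Nat.sub_zero]

theorem ncard_setOf_pos_natCast_lt_eq_floor {R : Type*} [Semiring R] [LinearOrder R]
    [IsStrictOrderedRing R] [FloorSemiring R] {c : R} (hc : ∀ m : ℕ, 0 < m → (m : R) ≠ c) :
    {m : ℕ | 0 < m ∧ (m : R) < c}.ncard = ⌊c⌋₊ := by
  have : {m : ℕ | 0 < m ∧ (m : R) < c} = Finset.Ioc 0 ⌊c⌋₊ := by
    ext m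
    simp only [mem_ofPred_eq, Finset.coe_Ioc, mem_Ioc, and_congr_right_iff]
    intro hm
    rw [Nat.le_floor_iff' hm.ne', lt_iff_le_and_ne, and_iff_left (hc m hm)]
  rw [this, ncard_coe_finset, Nat.card_Ioc, Nat.sub_zero]

theorem stmt_11 (n : ℕ) (hn : 2 ≤ n) (R : ℝ) (hR : 0 < R)
    (lam : ℕ → ℝ) (hlam : ∀ m, lam m = (m:ℝ)^4 - ((n:ℝ)-1)^2 / R^4)
    (L : (ℝ → ℝ) → (ℝ → ℝ))
    (hL : ∀ v, L v = fun θ => iteratedDeriv 4 v θ - ((n:ℝ)-1)^2 / R^4 * v θ) :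
    (∀ m : ℕ, L (fun θ => Real.cos (m*θ)) = fun θ => lam m * Real.cos (m*θ)) ∧
    (∀ m : ℕ, 1 ≤ m → L (fun θ => Real.sin (m*θ)) = fun θ => lam m * Real.sin (m*θ)) ∧
    ((¬ ∃ m : ℕ, 0 < m ∧ (m:ℝ) = Real.sqrt ((n:ℝ)-1) / R) →
      {m : ℕ | lam m = 0} = ∅ ∧
      1 + 2 * {m : ℕ | 0 < m ∧ lam m < 0}.ncard
        = 1 + 2 * Nat.floor (Real.sqrt ((n:ℝ)-1) / R)) ∧
    (∀ m0 : ℕ, 0 < m0 → (m0:ℝ) = Real.sqrt ((n:ℝ)-1) / R →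
      {m : ℕ | lam m = 0} = {m0} ∧
      2 * {m : ℕ | 0 < m ∧ lam m = 0}.ncard = 2 ∧
      1 + 2 * {m : ℕ | 0 < m ∧ lam m < 0}.ncard = 1 + 2 * (m0 - 1)) := by
  set c := √((n : ℝ) - 1) / R with hc
  have hn1 : (1 : ℝ) ≤ n - 1 := by
    have : (2 : ℝ) ≤ n := by exact_mod_cast hn
    linarith
  have hc_pos : 0 < c := div_pos (sqrt_pos.2 (by linarith)) hR
  have hlam_c (m : ℕ) : lam m = (m : ℝ) ^ 4 - c ^ 4 := by
    rw [hlam, hc, div_pow, show √((n : ℝ) - 1) ^ 4 = (√((n : ℝ) - 1) ^ 2) ^ 2 by ring,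
      sq_sqrt (by linarith)]
  have lam_eq_zero (m : ℕ) : lam m = 0 ↔ (m : ℝ) = c := by
    rw [hlam_c, sub_eq_zero, pow_left_inj₀ m.cast_nonneg hc_pos.le four_ne_zero]
  have lam_neg (m : ℕ) : lam m < 0 ↔ (m : ℝ) < c := by
    rw [hlam_c, sub_neg, pow_lt_pow_iff_left₀ m.cast_nonneg hc_pos.le four_ne_zero]
  refine ⟨fun m => ?_, fun m _ => ?_, fun hc_nat => ?_, fun m0 hm0 hm0c => ?_⟩
  · rw [hL, show 4 = 2 * 2 from rfl, iteratedDeriv_even_cos_mul, hlam]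
    ext θ; ring
  · rw [hL, show 4 = 2 * 2 from rfl, iteratedDeriv_even_sin_mul, hlam]
    ext θ; ring
  · have hc_ne (m : ℕ) (hm : 0 < m) : (m : ℝ) ≠ c := fun h => hc_nat ⟨m, hm, h⟩
    refine ⟨eq_empty_iff_forall_notMem.2 fun m hm => ?_, ?_⟩
    · rcases m.eq_zero_or_pos with rfl | hm_pos
      · exact hc_pos.ne (by exact_mod_cast (lam_eq_zero 0).1 hm)
      · exact hc_ne m hm_pos ((lam_eq_zero m).1 hm)
    · simp_rw [lam_neg, ncard_setOf_pos_natCast_lt_eq_floor hc_ne]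
  · simp_rw [lam_eq_zero, lam_neg, ← hm0c, Nat.cast_inj, Nat.cast_lt]
    have hpos_zero : {m : ℕ | 0 < m ∧ m = m0} = {m0} :=
      Set.ext fun m => ⟨And.right, fun h => ⟨h ▸ hm0, h⟩⟩
    exact ⟨rfl, by rw [hpos_zero, ncard_singleton], by rw [Nat.ncard_setOf_pos_lt]⟩
end

section
/- Let k be a positive natural number and consider the 4×4 matrix M with rows (m^2(3k^2+m^2), 0, 0, -2√2 k m^3), (0, m^2(3k^2+m^2), 2√2 k m^3, 0), (0, 2√2 k m^3, m^4+2m^2k^2-k^4, 0), (-2√2 k m^3, 0, 0, m^4+2m^2k^2-k^4), for m ≥ 1. The eigenvalues λ_m^± = (1/2)(-k^4 + 2m^4 + 5k^2 m^2 ± sqrt(k^8 + 2k^6 m^2 + k^4 m^4 + 32 k^2 m^6)) each have multiplicity 2, λ_m^+ > 0 for all m ≥ 1, λ_m^- < 0 for exactly the values 1 ≤ m ≤ k-1, and λ_k^- = 0. Hence the total count, over all m ≥ 1 together with the m = 0 contribution {0, -k^4}, of negative eigenvalues is 1 + 2(k-1) and of zero eigenvalues is 3. -/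
open Polynomial Set

private lemma aux_det (a b c d x : ℝ) (hd : d = -b) :
    (Matrix.of ![![a,0,0,d],![0,a,b,0],![0,b,c,0],![d,0,0,c]] :
      Matrix (Fin 4) (Fin 4) ℝ).charpoly.eval x = ((x-a)*(x-c) - b^2)^2 := by
  subst hd
  have h2 : Fin.castSucc (2 : Fin 3) = (2 : Fin 4) := rfl
  rw [Matrix.charpoly, ← Polynomial.coe_evalRingHom, RingHom.map_det]
  have h3 : Fin.succAbove (3 : Fin 4) (2 : Fin 3) = (2 : Fin 4) := rfl
  simp [Matrix.det_succ_row_zero, Fin.sum_univ_succ, Matrix.map_apply,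
    Matrix.charmatrix_apply, Matrix.one_apply, h2, h3,
    Matrix.diagonal_apply]
  ring

set_option maxHeartbeats 1600000 in
theorem stmt_16 (k : ℕ) (hk : 0 < k)
    (M : ℕ → Matrix (Fin 4) (Fin 4) ℝ)
    (hM : ∀ m : ℕ, M m = Matrix.of
      ![![(m:ℝ)^2*(3*(k:ℝ)^2+(m:ℝ)^2), 0, 0, -2*Real.sqrt 2*(k:ℝ)*(m:ℝ)^3],
        ![0, (m:ℝ)^2*(3*(k:ℝ)^2+(m:ℝ)^2), 2*Real.sqrt 2*(k:ℝ)*(m:ℝ)^3, 0],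
        ![0, 2*Real.sqrt 2*(k:ℝ)*(m:ℝ)^3, (m:ℝ)^4+2*(m:ℝ)^2*(k:ℝ)^2-(k:ℝ)^4, 0],
        ![-2*Real.sqrt 2*(k:ℝ)*(m:ℝ)^3, 0, 0, (m:ℝ)^4+2*(m:ℝ)^2*(k:ℝ)^2-(k:ℝ)^4]])
    (lamP lamM : ℕ → ℝ)
    (hP : ∀ m : ℕ, lamP m = (1/2) * (-(k:ℝ)^4 + 2*(m:ℝ)^4 + 5*(k:ℝ)^2*(m:ℝ)^2
      + Real.sqrt ((k:ℝ)^8 + 2*(k:ℝ)^6*(m:ℝ)^2 + (k:ℝ)^4*(m:ℝ)^4 + 32*(k:ℝ)^2*(m:ℝ)^6)))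
    (hMm : ∀ m : ℕ, lamM m = (1/2) * (-(k:ℝ)^4 + 2*(m:ℝ)^4 + 5*(k:ℝ)^2*(m:ℝ)^2
      - Real.sqrt ((k:ℝ)^8 + 2*(k:ℝ)^6*(m:ℝ)^2 + (k:ℝ)^4*(m:ℝ)^4 + 32*(k:ℝ)^2*(m:ℝ)^6))) :
    (∀ m : ℕ, 1 ≤ m →
      (M m).charpoly = ((X - Polynomial.C (lamP m)) * (X - Polynomial.C (lamM m)))^2) ∧
    (∀ m : ℕ, 1 ≤ m → 0 < lamP m) ∧
    (∀ m : ℕ, 1 ≤ m → (lamM m < 0 ↔ 1 ≤ m ∧ m ≤ k - 1)) ∧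
    lamM k = 0 ∧
    1 + 2 * {m : ℕ | 1 ≤ m ∧ lamM m < 0}.ncard = 1 + 2*(k-1) ∧
    1 + 2 * {m : ℕ | 1 ≤ m ∧ lamM m = 0}.ncard = 3 := by
  have hk1 : (1:ℝ) ≤ (k:ℝ) := by exact_mod_cast hk
  have hD0 : ∀ m : ℕ, (0:ℝ) ≤ (k:ℝ)^8 + 2*(k:ℝ)^6*(m:ℝ)^2 + (k:ℝ)^4*(m:ℝ)^4
      + 32*(k:ℝ)^2*(m:ℝ)^6 := fun m => by positivity
  have hu : ∀ m : ℕ, Real.sqrt ((k:ℝ)^8 + 2*(k:ℝ)^6*(m:ℝ)^2 + (k:ℝ)^4*(m:ℝ)^4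
      + 32*(k:ℝ)^2*(m:ℝ)^6) ^ 2
      = (k:ℝ)^8 + 2*(k:ℝ)^6*(m:ℝ)^2 + (k:ℝ)^4*(m:ℝ)^4 + 32*(k:ℝ)^2*(m:ℝ)^6 :=
    fun m => Real.sq_sqrt (hD0 m)
  -- sign lemmas
  have hneg : ∀ m : ℕ, 1 ≤ m → m < k → lamM m < 0 := by
    intro m h1 h2
    have hx1 : (1:ℝ) ≤ (m:ℝ) := by exact_mod_cast h1
    have hxy : (m:ℝ) + 1 ≤ (k:ℝ) := by exact_mod_cast h2
    rw [hMm]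
    have hAlt : -(k:ℝ)^4 + 2*(m:ℝ)^4 + 5*(k:ℝ)^2*(m:ℝ)^2
        < Real.sqrt ((k:ℝ)^8 + 2*(k:ℝ)^6*(m:ℝ)^2 + (k:ℝ)^4*(m:ℝ)^4 + 32*(k:ℝ)^2*(m:ℝ)^6) := by
      rcases lt_or_ge (-(k:ℝ)^4 + 2*(m:ℝ)^4 + 5*(k:ℝ)^2*(m:ℝ)^2) 0 with h | h
      · exact h.trans_le (Real.sqrt_nonneg _)
      · rw [Real.lt_sqrt h]
        have p1 : (0:ℝ) < (m:ℝ)^2 := by positivity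
        have p2 : (0:ℝ) < (k:ℝ)^2 - (m:ℝ)^2 := by nlinarith
        have p3 : (0:ℝ) < (m:ℝ)^4 - 2*(k:ℝ)^2*(m:ℝ)^2 + 3*(k:ℝ)^4 := by nlinarith [sq_nonneg ((m:ℝ)^2 - (k:ℝ)^2)]
        nlinarith [mul_pos (mul_pos p1 p2) p3]
    linarith
  have hposM : ∀ m : ℕ, k < m → 0 < lamM m := by
    intro m h2
    have hxy : (k:ℝ) + 1 ≤ (m:ℝ) := by exact_mod_cast h2
    rw [hMm]
    have hkm : (k:ℝ) ≤ (m:ℝ) := by linarith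
    have hm1 : (1:ℝ) ≤ (m:ℝ) := by linarith
    have h4 : (k:ℝ)^4 ≤ (m:ℝ)^4 := pow_le_pow_left₀ (by linarith) hkm 4
    have hm41 : (1:ℝ) ≤ (m:ℝ)^4 := by nlinarith [sq_nonneg ((m:ℝ)^2 - 1), sq_nonneg ((m:ℝ) - 1)]
    have hA : (0:ℝ) < -(k:ℝ)^4 + 2*(m:ℝ)^4 + 5*(k:ℝ)^2*(m:ℝ)^2 := by
      nlinarith [h4, hm41, mul_nonneg (sq_nonneg (k:ℝ)) (sq_nonneg (m:ℝ))]
    have hAlt : Real.sqrt ((k:ℝ)^8 + 2*(k:ℝ)^6*(m:ℝ)^2 + (k:ℝ)^4*(m:ℝ)^4 + 32*(k:ℝ)^2*(m:ℝ)^6)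
        < -(k:ℝ)^4 + 2*(m:ℝ)^4 + 5*(k:ℝ)^2*(m:ℝ)^2 := by
      rw [Real.sqrt_lt' hA]
      have p1 : (0:ℝ) < (m:ℝ)^2 := by nlinarith
      have p2 : (0:ℝ) < (m:ℝ)^2 - (k:ℝ)^2 := by nlinarith
      have p3 : (0:ℝ) < (m:ℝ)^4 - 2*(k:ℝ)^2*(m:ℝ)^2 + 3*(k:ℝ)^4 := by nlinarith [sq_nonneg ((m:ℝ)^2 - (k:ℝ)^2)]
      nlinarith [mul_pos (mul_pos p1 p2) p3]
    linarith
  have hzero : lamM k = 0 := by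
    rw [hMm]
    have h : (k:ℝ)^8 + 2*(k:ℝ)^6*(k:ℝ)^2 + (k:ℝ)^4*(k:ℝ)^4 + 32*(k:ℝ)^2*(k:ℝ)^6
        = (6*(k:ℝ)^4)^2 := by ring
    rw [h, Real.sqrt_sq (by positivity)]
    ring
  have hiff : ∀ m : ℕ, 1 ≤ m → (lamM m < 0 ↔ 1 ≤ m ∧ m ≤ k - 1) := by
    intro m h1
    constructor
    · intro h
      refine ⟨h1, ?_⟩
      by_contra hc
      have hge : k ≤ m := by omega
      rcases eq_or_lt_of_le hge with he | hl
      · have h0 := hzero; rw [he] at h0; linarith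
      · linarith [hposM m hl]
    · rintro ⟨_, h2⟩
      exact hneg m h1 (by omega)
  refine ⟨?_, ?_, hiff, hzero, ?_, ?_⟩
  · -- charpoly
    intro m hm
    apply Polynomial.funext
    intro x
    have hsum : lamP m + lamM m = (m:ℝ)^2*(3*(k:ℝ)^2+(m:ℝ)^2)
        + ((m:ℝ)^4+2*(m:ℝ)^2*(k:ℝ)^2-(k:ℝ)^4) := by
      rw [hP, hMm]; ring
    have hprod : lamP m * lamM m = (m:ℝ)^2*(3*(k:ℝ)^2+(m:ℝ)^2)
        * ((m:ℝ)^4+2*(m:ℝ)^2*(k:ℝ)^2-(k:ℝ)^4) - 8*(k:ℝ)^2*(m:ℝ)^6 := by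
      rw [hP, hMm]
      linear_combination (-(1:ℝ)/4) * hu m
    have hb2 : (2*Real.sqrt 2*(k:ℝ)*(m:ℝ)^3)^2 = 8*(k:ℝ)^2*(m:ℝ)^6 := by
      have : Real.sqrt 2 ^ 2 = 2 := Real.sq_sqrt (by norm_num)
      nlinarith [this]
    rw [hM m, aux_det _ _ _ _ _ (by ring)]
    simp only [eval_pow, eval_mul, eval_sub, eval_X, eval_C]
    have e1 : (x - (m:ℝ)^2*(3*(k:ℝ)^2+(m:ℝ)^2))
        * (x - ((m:ℝ)^4+2*(m:ℝ)^2*(k:ℝ)^2-(k:ℝ)^4))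
        - (2*Real.sqrt 2*(k:ℝ)*(m:ℝ)^3)^2
        = (x - lamP m) * (x - lamM m) := by
      linear_combination x * hsum - hprod - hb2
    rw [e1]
  · -- lamP positive
    intro m hm
    have hx1 : (1:ℝ) ≤ (m:ℝ) := by exact_mod_cast hm
    rw [hP]
    have hle : (k:ℝ)^4 ≤ Real.sqrt ((k:ℝ)^8 + 2*(k:ℝ)^6*(m:ℝ)^2 + (k:ℝ)^4*(m:ℝ)^4
        + 32*(k:ℝ)^2*(m:ℝ)^6) := by
      rw [Real.le_sqrt (by positivity) (hD0 m)]
      nlinarith [sq_nonneg ((k:ℝ)^3*(m:ℝ)), sq_nonneg ((k:ℝ)^2*(m:ℝ)^2), sq_nonneg ((k:ℝ)*(m:ℝ)^3)]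
    have hm0 : (0:ℝ) < (m:ℝ) := by linarith
    have hm4 : (0:ℝ) < (m:ℝ)^4 := by positivity
    have hkm2 : (0:ℝ) ≤ 5*(k:ℝ)^2*(m:ℝ)^2 := by positivity
    linarith [hle, hm4, hkm2]
  · -- counting negatives
    have hset : {m : ℕ | 1 ≤ m ∧ lamM m < 0} = Set.Icc 1 (k-1) := by
      ext m
      simp only [Set.mem_setOf_eq, Set.mem_Icc]
      constructor
      · rintro ⟨h1, h2⟩; exact ((hiff m h1).mp h2)
      · rintro ⟨h1, h2⟩; exact ⟨h1, (hiff m h1).mpr ⟨h1, h2⟩⟩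
    rw [hset, ← Finset.coe_Icc, Set.ncard_coe_finset, Nat.card_Icc]
    omega
  · -- counting zeros
    have hset : {m : ℕ | 1 ≤ m ∧ lamM m = 0} = {k} := by
      ext m
      simp only [Set.mem_setOf_eq, Set.mem_singleton_iff]
      constructor
      · rintro ⟨h1, h2⟩
        rcases lt_trichotomy m k with h | h | h
        · linarith [hneg m h1 h]
        · exact h
        · linarith [hposM m h]
      · rintro rfl; exact ⟨hk, hzero⟩
    rw [hset, Set.ncard_singleton]
end

section
/- For all smooth compactly supported functions v : ℝ → ℝ, ∫ℝ [v'' w'' + 2v'' w' + 2v' w'' + 4v' w'] du with w = v equals ∫ℝ [(v'')^2 + 4(v')^2] du, which is strictly positive unless v ≡ 0. -/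
open MeasureTheory
open scoped ContDiff

theorem stmt_17 (v : ℝ → ℝ) (hv : ContDiff ℝ (⊤ : ℕ∞) v) (hvc : HasCompactSupport v) :
    (∫ u : ℝ,
      (iteratedDeriv 2 v u * iteratedDeriv 2 v u
        + 2 * iteratedDeriv 2 v u * deriv v u
        + 2 * deriv v u * iteratedDeriv 2 v u
        + 4 * deriv v u * deriv v u))
    = (∫ u : ℝ, ((iteratedDeriv 2 v u)^2 + 4 * (deriv v u)^2)) ∧
    (v ≠ 0 → 0 < ∫ u : ℝ, ((iteratedDeriv 2 v u)^2 + 4 * (deriv v u)^2)) := by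
  have h1i : (1 : WithTop ℕ∞) ≤ ∞ := by exact_mod_cast le_top
  have hvs : ContDiff ℝ ∞ v := hv.of_le (by simp)
  have hf : ContDiff ℝ ∞ (deriv v) := (contDiff_infty_iff_deriv.mp hvs).2
  have hfc : HasCompactSupport (deriv v) := hvc.deriv
  have hit : iteratedDeriv 2 v = deriv (deriv v) := by
    rw [iteratedDeriv_succ, iteratedDeriv_one]
  have hf2 : ContDiff ℝ ∞ (deriv (deriv v)) := (contDiff_infty_iff_deriv.mp hf).2
  have hf2c : HasCompactSupport (deriv (deriv v)) := hfc.deriv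
  -- g = (deriv v)^2
  set g : ℝ → ℝ := fun u => (deriv v u) ^ 2 with hg
  have hgc : HasCompactSupport g := by
    apply HasCompactSupport.intro hfc
    intro x hx
    simp [hg, image_eq_zero_of_notMem_tsupport hx]
  have hgC : ContDiff ℝ 1 g := (hf.pow 2).of_le h1i
  have hgd : ∀ u, deriv g u = 2 * deriv v u * deriv (deriv v) u := by
    intro u
    have h1 : HasDerivAt (deriv v) (deriv (deriv v) u) u :=
      ((hf.differentiable (by simp)) u).hasDerivAt
    have h2 : HasDerivAt g (2 * (deriv v u) ^ 1 * deriv (deriv v) u) u := by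
      simpa using h1.fun_pow 2
    simpa using h2.deriv
  -- integrability facts
  have hint2 : Integrable (fun u => (iteratedDeriv 2 v u) ^ 2 + 4 * (deriv v u) ^ 2) := by
    apply Continuous.integrable_of_hasCompactSupport
    · rw [hit]
      exact ((hf2.continuous.pow 2).add (continuous_const.mul (hf.continuous.pow 2)))
    · apply HasCompactSupport.intro (hf2c.union hfc)
      intro x hx
      simp only [Set.mem_union] at hx
      push_neg at hx
      rw [hit, image_eq_zero_of_notMem_tsupport hx.1, image_eq_zero_of_notMem_tsupport hx.2]
      ring
  have hintg : Integrable (deriv g) := by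
    apply Continuous.integrable_of_hasCompactSupport
    · simp only [funext hgd]
      exact (continuous_const.mul hf.continuous).mul hf2.continuous
    · exact hgc.deriv
  -- integral of deriv g is 0
  have hzero : (∫ u : ℝ, deriv g u) = 0 := by
    rw [← intervalIntegral.integral_Iic_add_Ioi (b := (0 : ℝ)) hintg.integrableOn hintg.integrableOn]
    rw [HasCompactSupport.integral_Iic_deriv_eq hgC hgc 0,
      HasCompactSupport.integral_Ioi_deriv_eq hgC hgc 0]
    ring
  constructor
  · have heq : ∀ u : ℝ,
        (iteratedDeriv 2 v u * iteratedDeriv 2 v u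
          + 2 * iteratedDeriv 2 v u * deriv v u
          + 2 * deriv v u * iteratedDeriv 2 v u
          + 4 * deriv v u * deriv v u)
        = ((iteratedDeriv 2 v u) ^ 2 + 4 * (deriv v u) ^ 2) + 2 * deriv g u := by
      intro u
      rw [hgd u, hit]
      ring
    rw [integral_congr_ae (Filter.Eventually.of_forall heq),
      integral_add hint2 (hintg.const_mul 2), integral_const_mul, hzero]
    ring
  · intro hv0
    -- there is a point where deriv v ≠ 0
    have hdx : ∃ x, deriv v x ≠ 0 := by
      by_contra h
      push_neg at h
      have hconst := is_const_of_deriv_eq_zero (hv.differentiable (by simp)) h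
      apply hv0
      obtain ⟨y, hy⟩ : ∃ y, y ∉ tsupport v := by
        by_contra hy
        push_neg at hy
        exact hvc.ne_univ (Set.eq_univ_of_forall hy)
      funext x
      rw [hconst x y, image_eq_zero_of_notMem_tsupport hy]
      rfl
    obtain ⟨x0, hx0⟩ := hdx
    set F : ℝ → ℝ := fun u => (iteratedDeriv 2 v u) ^ 2 + 4 * (deriv v u) ^ 2 with hF
    have hFc : Continuous F := by
      rw [hF, hit]
      exact (hf2.continuous.pow 2).add (continuous_const.mul (hf.continuous.pow 2))
    have hFnn : ∀ u, 0 ≤ F u := fun u => by positivity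
    rw [integral_pos_iff_support_of_nonneg (fun u => hFnn u) hint2]
    have hopen : IsOpen (Function.support F) := by
      have : Function.support F = F ⁻¹' {0}ᶜ := rfl
      rw [this]
      exact isOpen_compl_singleton.preimage hFc
    refine hopen.measure_pos volume ⟨x0, ?_⟩
    simp only [Function.mem_support, hF]
    positivity
end
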